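/- Let σ > 0, α > 1 real, C a natural number, and u, u' : Fin C → ℝ. Then ∫ x, ∏_{j : Fin C} (gaussianPDFReal (u j) σ² (x j))^α · (gaussianPDFReal (u' j) σ² (x j))^(1-α) ∂(pi Lebesgue measure on Fin C → ℝ) = exp(α·(α-1)·(Σ_j (u j - u' j)²)/(2σ²)). Consequently, if Σ_j (u j - u' j)² ≤ s², the multivariate Gaussian mechanism that adds independent N(0, σ²) noise to each coordinate of a vector with L2-sensitivity s satisfies (α, α·s²/(2σ²))-Rényi differential privacy. -/

import Mathlib

/-!
Completing the square, `α (x - μ)² + (1 - α) (x - μ')² = (x - m)² - α (α - 1) (μ - μ')²` with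
`m = α μ + (1 - α) μ'`, so the geometric mixture `p^α q^(1-α)` of two Gaussian densities of equal
variance `v` is `exp (α (α - 1) (μ - μ')² / (2 v))` times the Gaussian density of mean `m`, whose
integral is `1`. The coordinates are independent, so the integral over `ℝ^C` is the product of the
one-dimensional ones, and its logarithm divided by `α - 1` is `α ‖u - u'‖² / (2 σ²)`.
-/

open MeasureTheory ProbabilityTheory Real
open scoped NNReal

lemma mul_exp_rpow_mul_mul_exp_rpow {c : ℝ} (hc : 0 < c) (a b α : ℝ) :
    (c * exp a) ^ α * (c * exp b) ^ (1 - α) = c * exp (α * a + (1 - α) * b) := by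
  rw [mul_rpow hc.le (exp_pos a).le, mul_rpow hc.le (exp_pos b).le, ← exp_mul, ← exp_mul,
    mul_mul_mul_comm, ← rpow_add hc, add_sub_cancel, rpow_one, ← exp_add, mul_comm a, mul_comm b]

lemma gaussianPDFReal_rpow_mul_rpow_one_sub (μ μ' : ℝ) {v : ℝ≥0} (hv : v ≠ 0) (α x : ℝ) :
    gaussianPDFReal μ v x ^ α * gaussianPDFReal μ' v x ^ (1 - α) =
      exp (α * (α - 1) * (μ - μ') ^ 2 / (2 * v)) *
        gaussianPDFReal (α * μ + (1 - α) * μ') v x := by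
  have hv' : (v : ℝ) ≠ 0 := mod_cast hv
  have hc : 0 < (√(2 * π * v))⁻¹ := by positivity
  rw [gaussianPDFReal, gaussianPDFReal, gaussianPDFReal, mul_exp_rpow_mul_mul_exp_rpow hc,
    mul_left_comm, ← exp_add]
  congr 2
  field_simp
  ring

lemma integral_gaussianPDFReal_rpow_mul_rpow_one_sub (μ μ' : ℝ) {v : ℝ≥0} (hv : v ≠ 0) (α : ℝ) :
    ∫ x, gaussianPDFReal μ v x ^ α * gaussianPDFReal μ' v x ^ (1 - α) =
      exp (α * (α - 1) * (μ - μ') ^ 2 / (2 * v)) := by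
  simp only [gaussianPDFReal_rpow_mul_rpow_one_sub μ μ' hv]
  rw [integral_const_mul, integral_gaussianPDFReal_eq_one _ hv, mul_one]

lemma integral_pi_gaussianPDFReal_rpow_mul_rpow_one_sub {ι : Type*} [Fintype ι] (u u' : ι → ℝ)
    {v : ℝ≥0} (hv : v ≠ 0) (α : ℝ) :
    ∫ x : ι → ℝ, ∏ j, gaussianPDFReal (u j) v (x j) ^ α * gaussianPDFReal (u' j) v (x j) ^ (1 - α)
        ∂(Measure.pi fun _ ↦ volume) =
      exp (α * (α - 1) * (∑ j, (u j - u' j) ^ 2) / (2 * v)) := by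
  rw [integral_fintype_prod_eq_prod (fun j x ↦
    gaussianPDFReal (u j) v x ^ α * gaussianPDFReal (u' j) v x ^ (1 - α))]
  simp only [integral_gaussianPDFReal_rpow_mul_rpow_one_sub _ _ hv]
  rw [← exp_sum, Finset.mul_sum, Finset.sum_div]

theorem stmt_3 (σ : ℝ) (hσ : 0 < σ) (α : ℝ) (hα : 1 < α) (C : ℕ)
    (u u' : Fin C → ℝ) (s : ℝ) :
    (∫ x : Fin C → ℝ, ∏ j : Fin C,
        (gaussianPDFReal (u j) ((σ ^ 2).toNNReal) (x j)) ^ α *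
          (gaussianPDFReal (u' j) ((σ ^ 2).toNNReal) (x j)) ^ (1 - α)
        ∂(Measure.pi fun _ : Fin C => volume)) =
      Real.exp (α * (α - 1) * (∑ j : Fin C, (u j - u' j) ^ 2) / (2 * σ ^ 2)) ∧
    ((∑ j : Fin C, (u j - u' j) ^ 2) ≤ s ^ 2 →
      (1 / (α - 1)) * Real.log (∫ x : Fin C → ℝ, ∏ j : Fin C,
          (gaussianPDFReal (u j) ((σ ^ 2).toNNReal) (x j)) ^ α *
            (gaussianPDFReal (u' j) ((σ ^ 2).toNNReal) (x j)) ^ (1 - α)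
          ∂(Measure.pi fun _ : Fin C => volume)) ≤
        α * s ^ 2 / (2 * σ ^ 2)) := by
  have hv : (σ ^ 2).toNNReal ≠ 0 := by simpa using hσ.ne'
  have hintegral := integral_pi_gaussianPDFReal_rpow_mul_rpow_one_sub u u' hv α
  rw [Real.coe_toNNReal _ (sq_nonneg σ)] at hintegral
  refine ⟨hintegral, fun hs ↦ ?_⟩
  rw [hintegral]
  have hα' : α - 1 ≠ 0 := sub_ne_zero.2 hα.ne'
  calc 1 / (α - 1) * log (exp (α * (α - 1) * (∑ j, (u j - u' j) ^ 2) / (2 * σ ^ 2)))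
      = α * (∑ j, (u j - u' j) ^ 2) / (2 * σ ^ 2) := by
        rw [log_exp]; field_simp
    _ ≤ α * s ^ 2 / (2 * σ ^ 2) := by gcongr
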